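/- Every total function g : ℕ → Bool such that for all n, (g n = false → C∞ n ≤ D∞ n) and (g n = true → D∞ n ≤ C∞ n), is an extension of f; that is, for every n and b, f n = some b implies g n = b. -/

import Mathlib

/-! If `f n = b`, let `m` be the least step at which `e` halts on `n`; its output is `b`, because
all halting runs of `e` agree. From step `m` on, the sequence attached to `b` is constantly
`1 - 2⁻ᵐ < 1` and the other one is constantly `1`, so the inequality imposed on `g n` is
violated unless `g n = b`. -/

open Nat.Partrec (Code)
open Nat.Partrec.Code

/-- The rational sequence `C`: if `f` (computed by code `e`) halts on input `n` by step `k`,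
with least halting step `m`, then `C n k = 1 - 2⁻ᵐ` if the output was `false`,
and `1` otherwise (in particular, if the output was `true`); if it has not halted
within `k` steps, then `C n k = 1`. -/
def Cq (e : Code) (n k : ℕ) : ℚ :=
  if h : ∃ m, m ≤ k ∧ (evaln m e n).isSome then
    if evaln (Nat.find h) e n = some (Encodable.encode false) then
      1 - (2 : ℚ)⁻¹ ^ (Nat.find h)
    else 1
  else 1

/-- The rational sequence `D`: symmetric to `C`, with the roles of the outputs
`true` and `false` swapped. -/
def Dq (e : Code) (n k : ℕ) : ℚ :=
  if h : ∃ m, m ≤ k ∧ (evaln m e n).isSome then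
    if evaln (Nat.find h) e n = some (Encodable.encode true) then
      1 - (2 : ℚ)⁻¹ ^ (Nat.find h)
    else 1
  else 1

/-- `C∞ n`, the real limit of the sequence `k ↦ C n k`. -/
noncomputable def Cinf (e : Code) (n : ℕ) : ℝ :=
  Filter.limUnder Filter.atTop fun k => ((Cq e n k : ℝ))

/-- `D∞ n`, the real limit of the sequence `k ↦ D n k`. -/
noncomputable def Dinf (e : Code) (n : ℕ) : ℝ :=
  Filter.limUnder Filter.atTop fun k => ((Dq e n k : ℝ))

def haltWeight (e : Code) (n : ℕ) (b : Bool) (k : ℕ) : ℚ :=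
  if h : ∃ m, m ≤ k ∧ (evaln m e n).isSome then
    if evaln (Nat.find h) e n = some (Encodable.encode b) then
      1 - (2 : ℚ)⁻¹ ^ (Nat.find h)
    else 1
  else 1

theorem Cq_eq_haltWeight (e : Code) (n k : ℕ) : Cq e n k = haltWeight e n false k := rfl

theorem Dq_eq_haltWeight (e : Code) (n k : ℕ) : Dq e n k = haltWeight e n true k := rfl

theorem Nat.find_bounded_eq {p : ℕ → Prop} [DecidablePred p] (h : ∃ m, p m) {k : ℕ}
    (hk : Nat.find h ≤ k) (h' : ∃ m, m ≤ k ∧ p m) : Nat.find h' = Nat.find h :=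
  le_antisymm (Nat.find_min' h' ⟨hk, Nat.find_spec h⟩) (Nat.find_min' h (Nat.find_spec h').2)

theorem evaln_eq_some_of_isSome {c : Code} {k m n x : ℕ} (hx : evaln k c n = some x)
    (hm : (evaln m c n).isSome) : evaln m c n = some x := by
  obtain ⟨y, hy⟩ := Option.isSome_iff_exists.1 hm
  rw [hy, Part.mem_unique (evaln_sound hy) (evaln_sound hx)]

theorem haltWeight_eventually_eq {e : Code} {n : ℕ} (h : ∃ m, (evaln m e n).isSome) (b : Bool) :
    ∀ᶠ k in Filter.atTop, haltWeight e n b k =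
      if evaln (Nat.find h) e n = some (Encodable.encode b) then 1 - (2 : ℚ)⁻¹ ^ Nat.find h
      else 1 := by
  filter_upwards [Filter.eventually_ge_atTop (Nat.find h)] with k hk
  have h' : ∃ m, m ≤ k ∧ (evaln m e n).isSome := ⟨_, hk, Nat.find_spec h⟩
  rw [haltWeight, dif_pos h', Nat.find_bounded_eq h hk h']

theorem exists_limUnder_haltWeight {e : Code} {n k : ℕ} {b : Bool}
    (hk : evaln k e n = some (Encodable.encode b)) :
    ∃ m : ℕ, ∀ b' : Bool, Filter.limUnder Filter.atTop (fun k => (haltWeight e n b' k : ℝ)) =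
      if b' = b then 1 - (2 : ℝ)⁻¹ ^ m else 1 := by
  have h : ∃ m, (evaln m e n).isSome := ⟨k, by simp [hk]⟩
  have hfind := evaln_eq_some_of_isSome hk (Nat.find_spec h)
  refine ⟨Nat.find h, fun b' => Filter.Tendsto.limUnder_eq ?_⟩
  refine tendsto_const_nhds.congr' ?_
  filter_upwards [haltWeight_eventually_eq h b'] with j hj
  simp only [hj, hfind, Option.some_inj, Encodable.encode_inj, eq_comm (a := b)]
  split_ifs <;> push_cast <;> rfl

theorem selector_extends_general (f : ℕ →. Bool) (e : Code)
    (he : ∀ (n : ℕ) (b : Bool), b ∈ f n ↔ ∃ k, evaln k e n = some (Encodable.encode b)) :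
    ∀ g : ℕ → Bool,
      (∀ n : ℕ, (g n = false → Cinf e n ≤ Dinf e n) ∧ (g n = true → Dinf e n ≤ Cinf e n)) →
      ∀ (n : ℕ) (b : Bool), f n = Part.some b → g n = b := by
  intro g hg n b hfb
  obtain ⟨k, hk⟩ := (he n b).1 (hfb ▸ Part.mem_some b)
  obtain ⟨m, hlim⟩ := exists_limUnder_haltWeight hk
  have hC : Cinf e n = if false = b then 1 - (2 : ℝ)⁻¹ ^ m else 1 := by
    simpa only [Cinf, Cq_eq_haltWeight] using hlim false
  have hD : Dinf e n = if true = b then 1 - (2 : ℝ)⁻¹ ^ m else 1 := by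
    simpa only [Dinf, Dq_eq_haltWeight] using hlim true
  have hpow : (0 : ℝ) < (2 : ℝ)⁻¹ ^ m := by positivity
  cases b <;> cases hgn : g n <;>
    simp only [Bool.false_eq_true, Bool.true_eq_false, if_true, if_false] at hC hD
  · rfl
  · linarith [(hg n).2 hgn]
  · linarith [(hg n).1 hgn]
  · rfl

/-- Any total function `g : ℕ → Bool` such that `g n = false` implies `C∞ n ≤ D∞ n`
and `g n = true` implies `D∞ n ≤ C∞ n` is an extension of `f`: whenever
`f n = some b`, also `g n = b`. -/
theorem selector_extends (f : ℕ →. Bool) (hf : Partrec f) (e : Code)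
    (he : ∀ (n : ℕ) (b : Bool), b ∈ f n ↔ ∃ k, evaln k e n = some (Encodable.encode b)) :
    ∀ g : ℕ → Bool,
      (∀ n : ℕ, (g n = false → Cinf e n ≤ Dinf e n) ∧ (g n = true → Dinf e n ≤ Cinf e n)) →
      ∀ (n : ℕ) (b : Bool), f n = Part.some b → g n = b :=
  selector_extends_general f e he
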